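/- Let g : ℝ → ℝ be a differentiable function, N a natural number, f : Fin N → ℝ, and W ∈ ℝ. Suppose b* : Fin N → ℝ satisfies ∑_i f_i · b*_i = W and minimizes ∑_i g(b_i) over all b : Fin N → ℝ with ∑_i f_i · b_i = W. Then for all indices i, j one has g'(b*_i) · f_j = g'(b*_j) · f_i. In particular, if f_i > 0 and f_j > 0 then g'(b*_i)/f_i = g'(b*_j)/f_j, i.e. g'(b*_i)/g'(b*_j) = f_i/f_j. -/

import Mathlib

/-!
Perturbing the minimizer along `t ↦ b* + t v` with `∑ f v = 0` keeps the constraint, so the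
one-variable function `t ↦ ∑ g (b*_k + t v_k)` is minimal at `0` and its derivative
`∑ g'(b*_k) v_k` vanishes there. The direction `v = f_j e_i - f_i e_j` turns this into
`g'(b*_i) f_j - g'(b*_j) f_i = 0`.
-/

open Finset

variable {ι : Type*} [Fintype ι]

lemma sum_mul_single_sub_single [DecidableEq ι] (w : ι → ℝ) (i j : ι) (a c : ℝ) :
    ∑ k, w k * (Pi.single i a - Pi.single j c : ι → ℝ) k = w i * a - w j * c := by
  simp only [Pi.sub_apply, mul_sub, sum_sub_distrib, Pi.single_apply, mul_ite, mul_zero,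
    sum_ite_eq', mem_univ, if_true]

lemma hasDerivAt_sum_comp_line {g : ℝ → ℝ} {b : ι → ℝ} (hg : ∀ k, DifferentiableAt ℝ g (b k))
    (v : ι → ℝ) :
    HasDerivAt (fun t => ∑ k, g (b k + t * v k)) (∑ k, deriv g (b k) * v k) 0 := by
  refine HasDerivAt.fun_sum fun k _ => ?_
  have hline : HasDerivAt (fun t : ℝ => b k + t * v k) (v k) 0 := by
    simpa using ((hasDerivAt_id (0 : ℝ)).mul_const (v k)).const_add (b k)
  have hg' : HasDerivAt g (deriv g (b k)) (b k + 0 * v k) := by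
    simpa using (hg k).hasDerivAt
  exact hg'.comp 0 hline

lemma sum_deriv_mul_eq_zero_of_constrained_min {g : ℝ → ℝ} {f bstar : ι → ℝ} {W : ℝ}
    (hg : ∀ k, DifferentiableAt ℝ g (bstar k)) (hconstr : ∑ k, f k * bstar k = W)
    (hmin : ∀ b : ι → ℝ, ∑ k, f k * b k = W → ∑ k, g (bstar k) ≤ ∑ k, g (b k))
    {v : ι → ℝ} (hv : ∑ k, f k * v k = 0) :
    ∑ k, deriv g (bstar k) * v k = 0 := by
  have hline_constr (t : ℝ) : ∑ k, f k * (bstar k + t * v k) = W := by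
    calc ∑ k, f k * (bstar k + t * v k) = ∑ k, f k * bstar k + t * ∑ k, f k * v k := by
          rw [mul_sum, ← sum_add_distrib]; congr 1; ext k; ring
      _ = W := by rw [hconstr, hv, mul_zero, add_zero]
  have hloc : IsLocalMin (fun t => ∑ k, g (bstar k + t * v k)) 0 :=
    Filter.Eventually.of_forall fun t => by simpa using hmin _ (hline_constr t)
  exact hloc.hasDerivAt_eq_zero (hasDerivAt_sum_comp_line hg v)

/-- necessity part of Proposition 4: if `g` is differentiable
and `b*` minimizes `∑ i, g (b i)` over all allocations `b` with wastage
`∑ i, f i * b i = W`, then `g'(b*_i) · f_j = g'(b*_j) · f_i` for all `i, j`;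
in particular, when `f_i > 0` and `f_j > 0`,
`g'(b*_i) / f_i = g'(b*_j) / f_j`. -/
theorem min_skip_implies_proportional_derivatives
    (g : ℝ → ℝ) (hdiff : Differentiable ℝ g)
    (N : ℕ) (f : Fin N → ℝ) (W : ℝ)
    (bstar : Fin N → ℝ) (hconstr : ∑ i, f i * bstar i = W)
    (hmin : ∀ b : Fin N → ℝ, ∑ i, f i * b i = W →
      ∑ i, g (bstar i) ≤ ∑ i, g (b i)) :
    (∀ i j : Fin N, deriv g (bstar i) * f j = deriv g (bstar j) * f i) ∧
    (∀ i j : Fin N, 0 < f i → 0 < f j →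
      deriv g (bstar i) / f i = deriv g (bstar j) / f j) := by
  have key (i j : Fin N) : deriv g (bstar i) * f j = deriv g (bstar j) * f i := by
    have hv : ∑ k, f k * (Pi.single i (f j) - Pi.single j (f i) : Fin N → ℝ) k = 0 := by
      rw [sum_mul_single_sub_single, mul_comm, sub_self]
    have h := sum_deriv_mul_eq_zero_of_constrained_min (fun k => hdiff (bstar k))
      hconstr hmin hv
    rwa [sum_mul_single_sub_single (fun k => deriv g (bstar k)), sub_eq_zero] at h
  exact ⟨key, fun i j hi hj => (div_eq_div_iff hi.ne' hj.ne').mpr (key i j)⟩
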